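/- The smash coproduct comultiplication on B ♯ H is coassociative: (Δ ⊗ id)∘Δ = (id ⊗ Δ)∘Δ, where Δ(b ♯ h) = Σ b₁ ♯ (b₂)₍₋₁₎ h₁ ⊗ (b₂)₍₀₎ ♯ h₂. -/
import Mathlib


open TensorProduct

noncomputable section

/-- The smash coproduct comultiplication on `B ⊗ H`, sending
`b ⊗ h` to `Σ b₁ ⊗ (b₂)₍₋₁₎ h₁ ⊗ ((b₂)₍₀₎ ⊗ h₂)`. -/
def smashComul (k : Type*) {H B : Type*} [Field k] [Semiring H] [Bialgebra k H]
    [AddCommGroup B] [Module k B] [Coalgebra k B] (ρ : B →ₗ[k] H ⊗[k] B) :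
    (B ⊗[k] H) →ₗ[k] ((B ⊗[k] H) ⊗[k] (B ⊗[k] H)) :=
  (TensorProduct.map
      ((TensorProduct.map LinearMap.id (LinearMap.mul' k H))
        ∘ₗ (TensorProduct.assoc k B H H).toLinearMap)
      LinearMap.id)
  ∘ₗ (TensorProduct.tensorTensorTensorComm k (B ⊗[k] H) B H H).toLinearMap
  ∘ₗ (TensorProduct.map
        ((TensorProduct.assoc k B H B).symm.toLinearMap
          ∘ₗ (TensorProduct.map LinearMap.id ρ))
        LinearMap.id)
  ∘ₗ (TensorProduct.map Coalgebra.comul Coalgebra.comul)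

/-- The counit `ε(b ⊗ h) = ε_B(b) ε_H(h)` of the smash coproduct. -/
def smashCounit (k : Type*) {H B : Type*} [Field k] [Semiring H] [Bialgebra k H]
    [AddCommGroup B] [Module k B] [Coalgebra k B] :
    (B ⊗[k] H) →ₗ[k] k :=
  (LinearMap.mul' k k) ∘ₗ (TensorProduct.map Coalgebra.counit Coalgebra.counit)

noncomputable section

variable (k : Type*) [Field k]

/-- Gadget: `(x ⊗ (y ⊗ z)) ⊗ (y' ⊗ w) ↦ (x ⊗ y*y') ⊗ (z ⊗ w)`. -/
def glue (X Y Z W : Type*) [AddCommMonoid X] [Module k X] [Semiring Y] [Algebra k Y]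
    [AddCommMonoid Z] [Module k Z] [AddCommMonoid W] [Module k W] :
    (X ⊗[k] (Y ⊗[k] Z)) ⊗[k] (Y ⊗[k] W) →ₗ[k] (X ⊗[k] Y) ⊗[k] (Z ⊗[k] W) :=
  (TensorProduct.map
      ((TensorProduct.map LinearMap.id (LinearMap.mul' k Y))
        ∘ₗ (TensorProduct.assoc k X Y Y).toLinearMap)
      LinearMap.id)
  ∘ₗ (TensorProduct.tensorTensorTensorComm k (X ⊗[k] Y) Z Y W).toLinearMap
  ∘ₗ (TensorProduct.map (TensorProduct.assoc k X Y Z).symm.toLinearMap LinearMap.id)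

@[simp] lemma glue_tmul (X Y Z W : Type*) [AddCommMonoid X] [Module k X] [Semiring Y]
    [Algebra k Y] [AddCommMonoid Z] [Module k Z] [AddCommMonoid W] [Module k W]
    (x : X) (y : Y) (z : Z) (y' : Y) (w : W) :
    glue k X Y Z W ((x ⊗ₜ (y ⊗ₜ z)) ⊗ₜ (y' ⊗ₜ w)) = (x ⊗ₜ (y * y')) ⊗ₜ (z ⊗ₜ w) := by
  simp [glue, LinearMap.mul'_apply]

end
noncomputable section
open Coalgebra
variable {k : Type*} [Field k] {H B : Type*} [Semiring H] [Bialgebra k H]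
  [AddCommGroup B] [Module k B] [Coalgebra k B] (ρ : B →ₗ[k] H ⊗[k] B)

/-- `Φ₁`: the part of the smash coproduct after the two comultiplications. -/
def phi1 : (B ⊗[k] B) ⊗[k] (H ⊗[k] H) →ₗ[k] ((B ⊗[k] H) ⊗[k] (B ⊗[k] H)) :=
  glue k B H B H ∘ₗ (TensorProduct.map (TensorProduct.map LinearMap.id ρ) LinearMap.id)

lemma smashComul_eq : smashComul k ρ = phi1 ρ ∘ₗ (TensorProduct.map comul comul) := by
  apply TensorProduct.ext'
  intro b h
  simp [smashComul, phi1, glue]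

lemma C1 : (TensorProduct.map (TensorProduct.map comul comul) LinearMap.id) ∘ₗ phi1 ρ
    = glue k (B ⊗[k] B) (H ⊗[k] H) B H
        ∘ₗ (TensorProduct.map
            (TensorProduct.map comul ((TensorProduct.map comul LinearMap.id) ∘ₗ ρ))
            (TensorProduct.map comul LinearMap.id)) := by
  ext b₁ b₂ h₁ h₂
  simp only [phi1, LinearMap.comp_apply, TensorProduct.map_tmul, LinearMap.id_coe, id_eq,
    AlgebraTensorModule.curry_apply, TensorProduct.curry_apply,
    LinearMap.coe_restrictScalars, LinearEquiv.coe_coe]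
  generalize ρ b₂ = P
  induction P using TensorProduct.induction_on with
  | zero => simp
  | add a b ha hb => simp only [tmul_add, add_tmul, map_add, ha, hb]
  | tmul p v => simp

/-- Normal form of the left-hand side. -/
def xiL : ((B ⊗[k] (H ⊗[k] B)) ⊗[k] ((H ⊗[k] H) ⊗[k] B)) ⊗[k] ((H ⊗[k] H) ⊗[k] H)
    →ₗ[k] (B ⊗[k] H) ⊗[k] ((B ⊗[k] H) ⊗[k] (B ⊗[k] H)) :=
  (TensorProduct.assoc k (B ⊗[k] H) (B ⊗[k] H) (B ⊗[k] H)).toLinearMap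
  ∘ₗ (TensorProduct.map (glue k B H B H) LinearMap.id)
  ∘ₗ glue k (B ⊗[k] (H ⊗[k] B)) (H ⊗[k] H) B H

/-- Normal form of the right-hand side. -/
def xiR : (B ⊗[k] (H ⊗[k] ((B ⊗[k] (H ⊗[k] B))))) ⊗[k] (H ⊗[k] (H ⊗[k] H))
    →ₗ[k] (B ⊗[k] H) ⊗[k] ((B ⊗[k] H) ⊗[k] (B ⊗[k] H)) :=
  (TensorProduct.map LinearMap.id (glue k B H B H))
  ∘ₗ glue k B H (B ⊗[k] (H ⊗[k] B)) (H ⊗[k] H)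

lemma C2 : (TensorProduct.assoc k (B ⊗[k] H) (B ⊗[k] H) (B ⊗[k] H)).toLinearMap
      ∘ₗ (TensorProduct.map (phi1 ρ) LinearMap.id) ∘ₗ glue k (B ⊗[k] B) (H ⊗[k] H) B H
    = xiL ∘ₗ (TensorProduct.map
        (TensorProduct.map (TensorProduct.map LinearMap.id ρ) LinearMap.id) LinearMap.id) := by
  ext b₁ b₂ s₁ s₂ v t₁ t₂ h₃
  simp only [xiL, phi1, LinearMap.comp_apply, TensorProduct.map_tmul, LinearMap.id_coe, id_eq,
    glue_tmul, AlgebraTensorModule.curry_apply, TensorProduct.curry_apply,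
    LinearMap.coe_restrictScalars, LinearEquiv.coe_coe, Algebra.TensorProduct.tmul_mul_tmul]

lemma C3 : (TensorProduct.map LinearMap.id (phi1 ρ ∘ₗ (TensorProduct.map comul comul)))
      ∘ₗ phi1 ρ
    = xiR ∘ₗ (TensorProduct.map
        (TensorProduct.map LinearMap.id
          ((TensorProduct.map LinearMap.id ((TensorProduct.map LinearMap.id ρ) ∘ₗ comul)) ∘ₗ ρ))
        (TensorProduct.map LinearMap.id comul)) := by
  ext b₁ b₂ h₁ h₂
  simp only [xiR, phi1, LinearMap.comp_apply, TensorProduct.map_tmul, LinearMap.id_coe, id_eq,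
    AlgebraTensorModule.curry_apply, TensorProduct.curry_apply,
    LinearMap.coe_restrictScalars, LinearEquiv.coe_coe]
  generalize ρ b₂ = P
  induction P using TensorProduct.induction_on with
  | zero => simp
  | add a b ha hb => simp only [tmul_add, add_tmul, map_add, ha, hb]
  | tmul p v =>
    simp only [glue_tmul, TensorProduct.map_tmul, LinearMap.comp_apply, LinearMap.id_coe, id_eq]

lemma C4 : xiL ∘ₗ (TensorProduct.map
        (TensorProduct.map (TensorProduct.map LinearMap.id ρ)
          ((TensorProduct.assoc k H H B).symm.toLinearMap
            ∘ₗ (TensorProduct.map LinearMap.id ρ) ∘ₗ ρ))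
        LinearMap.id)
    = xiR ∘ₗ (TensorProduct.map
        ((TensorProduct.map LinearMap.id
            ((TensorProduct.map LinearMap.id (TensorProduct.map LinearMap.id ρ))
              ∘ₗ (TensorProduct.map (LinearMap.mul' k H) LinearMap.id)
              ∘ₗ (TensorProduct.tensorTensorTensorComm k H B H B).toLinearMap
              ∘ₗ (TensorProduct.map ρ ρ)))
          ∘ₗ (TensorProduct.assoc k B B B).toLinearMap)
        (TensorProduct.assoc k H H H).toLinearMap) := by
  ext b₁ b₂ b₃ h₁ h₂ h₃
  simp only [xiL, xiR, LinearMap.comp_apply, TensorProduct.map_tmul, LinearMap.id_coe, id_eq,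
    AlgebraTensorModule.curry_apply, TensorProduct.curry_apply,
    LinearMap.coe_restrictScalars, LinearEquiv.coe_coe, TensorProduct.assoc_tmul]
  generalize ρ b₂ = P
  induction P using TensorProduct.induction_on with
  | zero => simp
  | add a b ha hb => simp only [tmul_add, add_tmul, map_add, ha, hb]
  | tmul p v =>
    generalize ρ b₃ = Q
    induction Q using TensorProduct.induction_on with
    | zero => simp
    | add a b ha hb => simp only [tmul_add, add_tmul, map_add, ha, hb]
    | tmul q w =>
      simp only [TensorProduct.map_tmul, LinearMap.id_coe, id_eq, LinearMap.comp_apply,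
        TensorProduct.tensorTensorTensorComm_tmul, LinearMap.mul'_apply]
      generalize ρ w = R
      induction R using TensorProduct.induction_on with
      | zero => simp
      | add a b ha hb => simp only [tmul_add, add_tmul, map_add, ha, hb]
      | tmul r w₀ => simp [Algebra.TensorProduct.tmul_mul_tmul, mul_assoc]


end


/-- the smash coproduct comultiplication is coassociative. -/
theorem smashComul_coassoc (k H B : Type*) [Field k] [Semiring H] [Bialgebra k H]
    [AddCommGroup B] [Module k B] [Coalgebra k B] (ρ : B →ₗ[k] H ⊗[k] B)
    (hρ_coassoc : (TensorProduct.assoc k H H B).toLinearMap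
        ∘ₗ (TensorProduct.map Coalgebra.comul LinearMap.id) ∘ₗ ρ
      = (TensorProduct.map LinearMap.id ρ) ∘ₗ ρ)
    (hρ_counit : (TensorProduct.lid k B).toLinearMap
        ∘ₗ (TensorProduct.map Coalgebra.counit LinearMap.id) ∘ₗ ρ = LinearMap.id)
    (hcc : ∀ b : B,
      (TensorProduct.map LinearMap.id Coalgebra.comul) (ρ b)
        = (TensorProduct.map (LinearMap.mul' k H) LinearMap.id)
            ((TensorProduct.tensorTensorTensorComm k H B H B)
              ((TensorProduct.map ρ ρ) (Coalgebra.comul b))))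
    (hccε : ∀ b : B,
      (TensorProduct.rid k H) ((TensorProduct.map LinearMap.id Coalgebra.counit) (ρ b))
        = Coalgebra.counit (R := k) b • (1 : H)) :
    (TensorProduct.assoc k (B ⊗[k] H) (B ⊗[k] H) (B ⊗[k] H)).toLinearMap
        ∘ₗ (TensorProduct.map (smashComul k ρ) LinearMap.id) ∘ₗ smashComul k ρ
      = (TensorProduct.map LinearMap.id (smashComul k ρ)) ∘ₗ smashComul k ρ := by
  classical
  -- map-level forms of the hypotheses
  have A1 : (TensorProduct.map Coalgebra.comul LinearMap.id) ∘ₗ ρ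
      = (TensorProduct.assoc k H H B).symm.toLinearMap
          ∘ₗ (TensorProduct.map LinearMap.id ρ) ∘ₗ ρ := by
    rw [← hρ_coassoc]; ext x; simp
  have A2 : (TensorProduct.map LinearMap.id Coalgebra.comul) ∘ₗ ρ
      = (TensorProduct.map (LinearMap.mul' k H) LinearMap.id)
          ∘ₗ (TensorProduct.tensorTensorTensorComm k H B H B).toLinearMap
          ∘ₗ (TensorProduct.map ρ ρ) ∘ₗ Coalgebra.comul := by
    ext x; simpa using hcc x
  have A3 : (TensorProduct.map LinearMap.id Coalgebra.comul)
        ∘ₗ (Coalgebra.comul (R := k) (A := B))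
      = (TensorProduct.assoc k B B B).toLinearMap
          ∘ₗ (TensorProduct.map Coalgebra.comul LinearMap.id) ∘ₗ Coalgebra.comul := by
    ext x
    simpa [LinearMap.rTensor, LinearMap.lTensor] using (Coalgebra.coassoc_apply (R := k) x).symm
  have A4 : (TensorProduct.map LinearMap.id Coalgebra.comul)
        ∘ₗ (Coalgebra.comul (R := k) (A := H))
      = (TensorProduct.assoc k H H H).toLinearMap
          ∘ₗ (TensorProduct.map Coalgebra.comul LinearMap.id) ∘ₗ Coalgebra.comul := by
    ext x
    simpa [LinearMap.rTensor, LinearMap.lTensor] using (Coalgebra.coassoc_apply (R := k) x).symm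
  ext b h
  simp only [AlgebraTensorModule.curry_apply, TensorProduct.curry_apply,
    LinearMap.coe_restrictScalars, LinearEquiv.coe_coe, LinearMap.comp_apply]
  set cb3 := (TensorProduct.map Coalgebra.comul LinearMap.id)
      ((Coalgebra.comul (R := k) (A := B)) b) with hcb3
  set h3 := (TensorProduct.map Coalgebra.comul LinearMap.id)
      ((Coalgebra.comul (R := k) (A := H)) h) with hh3
  -- Left-hand side
  have hL : (TensorProduct.assoc k (B ⊗[k] H) (B ⊗[k] H) (B ⊗[k] H))
        ((TensorProduct.map (smashComul k ρ) LinearMap.id) (smashComul k ρ (b ⊗ₜ[k] h)))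
      = xiL ((TensorProduct.map
          (TensorProduct.map (TensorProduct.map LinearMap.id ρ)
            ((TensorProduct.assoc k H H B).symm.toLinearMap
              ∘ₗ (TensorProduct.map LinearMap.id ρ) ∘ₗ ρ))
          LinearMap.id) (cb3 ⊗ₜ[k] h3)) := by
    have e0 : smashComul k ρ (b ⊗ₜ[k] h)
        = phi1 ρ (Coalgebra.comul b ⊗ₜ[k] Coalgebra.comul h) := by
      rw [smashComul_eq]; simp
    have e1 : (TensorProduct.map (smashComul k ρ) (LinearMap.id (R := k) (M := B ⊗[k] H)))
        = (TensorProduct.map (phi1 ρ) LinearMap.id)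
            ∘ₗ (TensorProduct.map (TensorProduct.map Coalgebra.comul Coalgebra.comul)
                LinearMap.id) := by
      rw [smashComul_eq]; apply TensorProduct.ext'; intro x y; simp
    rw [e0, e1]
    simp only [LinearMap.comp_apply]
    have c1 := LinearMap.congr_fun (C1 ρ) (Coalgebra.comul b ⊗ₜ[k] Coalgebra.comul h)
    simp only [LinearMap.comp_apply, TensorProduct.map_tmul] at c1
    rw [c1]
    have c2 := LinearMap.congr_fun (C2 ρ)
      ((TensorProduct.map Coalgebra.comul ((TensorProduct.map Coalgebra.comul LinearMap.id) ∘ₗ ρ))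
          (Coalgebra.comul b) ⊗ₜ[k]
        (TensorProduct.map Coalgebra.comul LinearMap.id) (Coalgebra.comul h))
    simp only [LinearMap.comp_apply, LinearEquiv.coe_coe] at c2
    rw [c2]
    have hcolmap : (TensorProduct.map (TensorProduct.map LinearMap.id ρ) LinearMap.id)
          ∘ₗ (TensorProduct.map Coalgebra.comul
              ((TensorProduct.map Coalgebra.comul LinearMap.id) ∘ₗ ρ))
        = (TensorProduct.map (TensorProduct.map LinearMap.id ρ)
            ((TensorProduct.assoc k H H B).symm.toLinearMap
              ∘ₗ (TensorProduct.map LinearMap.id ρ) ∘ₗ ρ))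
          ∘ₗ (TensorProduct.map Coalgebra.comul LinearMap.id) := by
      apply TensorProduct.ext'
      intro x y
      have a1 := LinearMap.congr_fun A1 y
      simp only [LinearMap.comp_apply, TensorProduct.map_tmul, LinearMap.id_coe, id_eq,
        LinearEquiv.coe_coe] at a1 ⊢
      rw [a1]
    have hx := LinearMap.congr_fun hcolmap (Coalgebra.comul b)
    simp only [LinearMap.comp_apply] at hx
    simp only [TensorProduct.map_tmul, LinearMap.id_coe, id_eq]
    rw [hx]
  -- Right-hand side
  have hR : (TensorProduct.map LinearMap.id (smashComul k ρ)) (smashComul k ρ (b ⊗ₜ[k] h))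
      = xiR ((TensorProduct.map
          ((TensorProduct.map LinearMap.id
              ((TensorProduct.map LinearMap.id (TensorProduct.map LinearMap.id ρ))
                ∘ₗ (TensorProduct.map (LinearMap.mul' k H) LinearMap.id)
                ∘ₗ (TensorProduct.tensorTensorTensorComm k H B H B).toLinearMap
                ∘ₗ (TensorProduct.map ρ ρ)))
            ∘ₗ (TensorProduct.assoc k B B B).toLinearMap)
          (TensorProduct.assoc k H H H).toLinearMap) (cb3 ⊗ₜ[k] h3)) := by
    have e0 : smashComul k ρ (b ⊗ₜ[k] h)
        = phi1 ρ (Coalgebra.comul b ⊗ₜ[k] Coalgebra.comul h) := by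
      rw [smashComul_eq]; simp
    rw [e0, smashComul_eq]
    have c3 := LinearMap.congr_fun (C3 ρ) (Coalgebra.comul b ⊗ₜ[k] Coalgebra.comul h)
    simp only [LinearMap.comp_apply, TensorProduct.map_tmul] at c3 ⊢
    rw [c3]
    -- rewrite the B-side factor
    have hsplit : (TensorProduct.map LinearMap.id
          ((TensorProduct.map LinearMap.id
              ((TensorProduct.map LinearMap.id ρ) ∘ₗ Coalgebra.comul)) ∘ₗ ρ))
        = (TensorProduct.map LinearMap.id
            ((TensorProduct.map LinearMap.id (TensorProduct.map LinearMap.id ρ))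
              ∘ₗ (TensorProduct.map (LinearMap.mul' k H) LinearMap.id)
              ∘ₗ (TensorProduct.tensorTensorTensorComm k H B H B).toLinearMap
              ∘ₗ (TensorProduct.map ρ ρ)))
          ∘ₗ ((TensorProduct.map LinearMap.id Coalgebra.comul)
              : B ⊗[k] B →ₗ[k] B ⊗[k] (B ⊗[k] B)) := by
      have hss : (TensorProduct.map (LinearMap.id (R := k) (M := H))
            ((TensorProduct.map LinearMap.id ρ) ∘ₗ Coalgebra.comul))
          = (TensorProduct.map LinearMap.id (TensorProduct.map LinearMap.id ρ))
            ∘ₗ (TensorProduct.map LinearMap.id Coalgebra.comul) := by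
        apply TensorProduct.ext'
        intro u v
        simp
      apply TensorProduct.ext'
      intro x y
      have a2 := LinearMap.congr_fun A2 y
      simp only [LinearMap.comp_apply, TensorProduct.map_tmul, LinearMap.id_coe, id_eq,
        LinearEquiv.coe_coe] at a2 ⊢
      rw [hss]
      simp only [LinearMap.comp_apply]
      rw [a2]
    have hxB := LinearMap.congr_fun hsplit (Coalgebra.comul b)
    simp only [LinearMap.comp_apply] at hxB
    rw [hxB]
    have a3 := LinearMap.congr_fun A3 b
    have a4 := LinearMap.congr_fun A4 h
    simp only [LinearMap.comp_apply, LinearEquiv.coe_coe] at a3 a4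
    rw [a3, a4]
    simp only [LinearEquiv.coe_coe, ← hcb3, ← hh3]
  rw [hL, hR]
  exact (LinearMap.congr_fun (C4 ρ) (cb3 ⊗ₜ[k] h3)).trans rfl
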